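/- arXiv:1809.01468 — 3 statements merged into one kernel-verified Lean document; each statement's English description precedes it below -/
import Mathlib

section
/- Let G be an ordered graph (a finite graph equipped with a total order on its edges and a total order on its vertices), and construct the height table of G. Then G contains an edge e whose height h(e,G) in the height table is at least d̄(G)/2, where d̄(G) is the average degree of G. -/
open scoped Classical

namespace EO

/-- Auxiliary choice function for building the height table: given the list `prev` of the
(optional) entries at all earlier scanning positions, `htPick N G w k prev` is the entry at
scanning position `k`, namely the `w`-largest edge of `G` containing the column vertex
`⟨k % N⟩` of position `k` that does not occur among the earlier entries, if any exists. -/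
noncomputable def htPick (N : ℕ) (G : SimpleGraph (Fin N)) (w : Sym2 (Fin N) → ℕ)
    (k : ℕ) (prev : List (Option (Sym2 (Fin N)))) : Option (Sym2 (Fin N)) :=
  if hN : 0 < N then
    if h : ∃ e, (e ∈ G.edgeSet ∧ (⟨k % N, Nat.mod_lt k hN⟩ : Fin N) ∈ e ∧
          some e ∉ prev) ∧
        ∀ f, (f ∈ G.edgeSet ∧ (⟨k % N, Nat.mod_lt k hN⟩ : Fin N) ∈ f ∧
          some f ∉ prev) → w f ≤ w e
    then some h.choose else none
  else none

/-- The list of the first `k` entries of the height table of the ordered graph `G`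
(vertex set `Fin N` with its natural vertex order, edge order given by the injective
weight `w`).  Scanning position `k` corresponds to row `k / N + 1` and column `⟨k % N⟩`,
so scanning positions in increasing order of `k` is exactly scanning the table in
increasing lexicographic order (row first, then vertex order within a row). -/
noncomputable def htList (N : ℕ) (G : SimpleGraph (Fin N)) (w : Sym2 (Fin N) → ℕ) :
    ℕ → List (Option (Sym2 (Fin N)))
  | 0 => []
  | k + 1 => htList N G w k ++ [htPick N G w k (htList N G w k)]

/-- The entry of the height table of `G` at scanning position `k`: the `w`-largest
not-yet-entered edge containing the column vertex of position `k`, if any. -/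
noncomputable def htEntry (N : ℕ) (G : SimpleGraph (Fin N)) (w : Sym2 (Fin N) → ℕ)
    (k : ℕ) : Option (Sym2 (Fin N)) :=
  htPick N G w k (htList N G w k)

/-- The scanning index at which the edge `e` is entered into the height table
(junk value `0` if `e` is never entered; every edge of `G` is in fact entered exactly
once).  The lexicographic order on table positions corresponds exactly to the order of
scanning indices. -/
noncomputable def htIndex (N : ℕ) (G : SimpleGraph (Fin N)) (w : Sym2 (Fin N) → ℕ)
    (e : Sym2 (Fin N)) : ℕ :=
  if h : ∃ k, htEntry N G w k = some e then Nat.find h else 0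

/-- The height (row, `1`-indexed) of the edge `e` in the height table of `G`. -/
noncomputable def height (N : ℕ) (G : SimpleGraph (Fin N)) (w : Sym2 (Fin N) → ℕ)
    (e : Sym2 (Fin N)) : ℕ :=
  htIndex N G w e / N + 1

/-- The index of the column (vertex) of the edge `e` in the height table of `G`. -/
noncomputable def col (N : ℕ) (G : SimpleGraph (Fin N)) (w : Sym2 (Fin N) → ℕ)
    (e : Sym2 (Fin N)) : ℕ :=
  htIndex N G w e % N

/-- The column vertex of the edge `e` in the height table of `G` (for `N > 0`). -/
noncomputable def colV (N : ℕ) (hN : 0 < N) (G : SimpleGraph (Fin N))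
    (w : Sym2 (Fin N) → ℕ) (e : Sym2 (Fin N)) : Fin N :=
  ⟨htIndex N G w e % N, Nat.mod_lt _ hN⟩

/-- A list of edges is increasing (with respect to the edge order given by `w`) if
consecutive entries are strictly increasing. -/
def Increasing {V : Type*} (w : Sym2 V → ℕ) (l : List (Sym2 V)) : Prop :=
  l.Chain' fun a b => w a < w b

end EO

/-!
While the column vertex `v` of a scan position still has an edge that has not been entered,
that position receives a new edge. Since the positions of column `v` form an infinite
arithmetic progression and there are finitely many edges, every edge of `G` is entered, at a
scan position distinct from those of all other edges. So the last edge entered sits at scan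
position at least `|E(G)| - 1`, that is, in row at least `|E(G)| / N = d̄(G) / 2`.
-/

theorem Set.Finite.exists_ncard_le_add_one_of_injOn {α : Type*} {s : Set α} (hs : s.Finite)
    (hne : s.Nonempty) {f : α → ℕ} (hf : s.InjOn f) : ∃ x ∈ s, s.ncard ≤ f x + 1 := by
  obtain ⟨x, hx, hmax⟩ := s.exists_max_image f hs hne
  refine ⟨x, hx, ?_⟩
  calc s.ncard ≤ (↑(Finset.range (f x + 1)) : Set ℕ).ncard :=
        Set.ncard_le_ncard_of_injOn f
          (fun y hy => by simpa [Nat.lt_succ_iff] using hmax y hy) hf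
    _ = f x + 1 := by rw [Set.ncard_coe_finset, Finset.card_range]

theorem Fin.pos_of_sym2 {n : ℕ} (e : Sym2 (Fin n)) : 0 < n :=
  Sym2.inductionOn (f := fun _ => 0 < n) e fun v _ => v.pos

namespace EO

variable {N : ℕ} {G : SimpleGraph (Fin N)} {w : Sym2 (Fin N) → ℕ}

theorem htList_eq_map_range (k : ℕ) :
    htList N G w k = (List.range k).map (htEntry N G w) := by
  induction k with
  | zero => simp [htList]
  | succ k ih => simp [htList, List.range_succ, ih, htEntry]

theorem some_mem_htList_iff {k : ℕ} {e : Sym2 (Fin N)} :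
    some e ∈ htList N G w k ↔ ∃ j < k, htEntry N G w j = some e := by
  simp [htList_eq_map_range]

theorem some_notMem_htList_of_htEntry_eq_some {k : ℕ} {e : Sym2 (Fin N)}
    (h : htEntry N G w k = some e) : some e ∉ htList N G w k := by
  unfold htEntry htPick at h
  split_ifs at h with hN hex
  obtain rfl := Option.some_injective _ h
  exact hex.choose_spec.1.2.2

theorem eq_of_htEntry_eq_some {i j : ℕ} {e : Sym2 (Fin N)}
    (hi : htEntry N G w i = some e) (hj : htEntry N G w j = some e) : i = j := by
  by_contra hne
  rcases Nat.lt_or_gt_of_ne hne with hij | hji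
  · exact some_notMem_htList_of_htEntry_eq_some hj (some_mem_htList_iff.2 ⟨i, hij, hi⟩)
  · exact some_notMem_htList_of_htEntry_eq_some hi (some_mem_htList_iff.2 ⟨j, hji, hj⟩)

theorem htEntry_isSome {v : Fin N} {k : ℕ} (hk : k % N = v) {e : Sym2 (Fin N)}
    (he : e ∈ G.edgeSet) (hv : v ∈ e) (hnew : some e ∉ htList N G w k) :
    (htEntry N G w k).isSome := by
  have hN : 0 < N := v.pos
  have hcol : (⟨k % N, Nat.mod_lt k hN⟩ : Fin N) = v := Fin.ext hk
  let candidates := {f ∈ G.edgeSet | v ∈ f ∧ some f ∉ htList N G w k}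
  obtain ⟨m, hm, hmax⟩ :=
    candidates.exists_max_image w (Set.toFinite _) ⟨e, he, hv, hnew⟩
  unfold htEntry htPick
  rw [dif_pos hN, dif_pos (by simp only [hcol]; exact ⟨m, hm, fun f hf => hmax f hf⟩)]
  rfl

theorem exists_htEntry_eq_some {e : Sym2 (Fin N)} (he : e ∈ G.edgeSet) :
    ∃ k, htEntry N G w k = some e := by
  by_contra! hnever
  obtain ⟨⟨v, u⟩⟩ := e
  have hN : 0 < N := v.pos
  have hcol (i : ℕ) : (v + N * i) % N = v := by
    rw [Nat.add_mul_mod_self_left, Nat.mod_eq_of_lt v.isLt]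
  have hsome (i : ℕ) : (htEntry N G w (v + N * i)).isSome :=
    htEntry_isSome (hcol i) he (Sym2.mem_mk_left v u) fun hmem => by
      obtain ⟨j, -, hj⟩ := some_mem_htList_iff.1 hmem
      exact hnever j hj
  refine not_injective_infinite_finite (fun i => htEntry N G w (v + N * i)) fun i j hij => ?_
  obtain ⟨f, hf⟩ := Option.isSome_iff_exists.1 (hsome i)
  simpa [hN.ne'] using eq_of_htEntry_eq_some hf (hij.symm.trans hf)

theorem htEntry_htIndex {e : Sym2 (Fin N)} (he : e ∈ G.edgeSet) :
    htEntry N G w (htIndex N G w e) = some e := by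
  have h := exists_htEntry_eq_some (w := w) he
  rw [htIndex, dif_pos h]
  exact Nat.find_spec h

theorem htIndex_injOn : G.edgeSet.InjOn (htIndex N G w) := fun _ he _ hf hef =>
  Option.some_injective _ <| (htEntry_htIndex he).symm.trans (hef ▸ htEntry_htIndex hf)

theorem exists_ncard_edgeSet_le_mul_height (hE : G.edgeSet.Nonempty) :
    ∃ e ∈ G.edgeSet, G.edgeSet.ncard ≤ N * height N G w e := by
  obtain ⟨e, he, hcard⟩ :=
    (Set.toFinite G.edgeSet).exists_ncard_le_add_one_of_injOn hE (htIndex_injOn (w := w))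
  exact ⟨e, he, hcard.trans (Nat.lt_mul_div_succ _ (Fin.pos_of_sym2 e))⟩

end EO

theorem stmt4_general (N : ℕ) (G : SimpleGraph (Fin N)) (w : Sym2 (Fin N) → ℕ)
    (hE : G.edgeSet.Nonempty) :
    ∃ e ∈ G.edgeSet, (2 * (G.edgeSet.ncard : ℝ) / (N : ℝ)) / 2 ≤ (EO.height N G w e : ℝ) := by
  obtain ⟨e, he, hcard⟩ := EO.exists_ncard_edgeSet_le_mul_height (w := w) hE
  refine ⟨e, he, ?_⟩
  have hN : (0 : ℝ) < N := by exact_mod_cast Fin.pos_of_sym2 e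
  rw [mul_div_assoc, mul_div_cancel_left₀ _ two_ne_zero, div_le_iff₀ hN]
  exact_mod_cast hcard.trans_eq (mul_comm _ _)

/-- Lemma 3.6.  Every ordered graph `G` (here: vertex set `Fin N` with
its natural order, edge order given by the injective weight `w`) has an edge `e` whose
height in the height table is at least `d̄(G)/2`, where `d̄(G) = 2|E(G)|/N` is the average
degree of `G`. -/
theorem stmt4 (N : ℕ) (G : SimpleGraph (Fin N)) (w : Sym2 (Fin N) → ℕ)
    (hw : Function.Injective w) (hE : G.edgeSet.Nonempty) :
    ∃ e ∈ G.edgeSet, (2 * (G.edgeSet.ncard : ℝ) / (N : ℝ)) / 2 ≤ (EO.height N G w e : ℝ) :=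
  stmt4_general N G w hE
end

section
/- Given an increasing trail W = w₀w₁…w_k and an increasing path P = p₀p₁…p_ℓ in an edge-ordered graph such that the last edge w_{k−1}w_k of W equals the first edge p₀p₁ of P (as an unordered pair), one can find an increasing path using only edges of E(W) ∪ E(P) which starts with the edge w₀w₁ and has length at least ℓ/(k+1) − 1. -/
open scoped Classical

/-!
Let `A` be the vertex set of `W`. Cutting `P` just before each of its vertices in `A` splits it
into at most `|A| ≤ k + 1` pieces, each starting in `A` and never returning to `A`, so some piece
`S` has length at least `(ℓ + 1) / (k + 1) - 1`. Shortcutting the loops of `W` (crossing its first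
edge backwards if the shortcut passes through `w₀` again) gives an increasing path `Q` inside `W`
that starts with the edge `w₀w₁` and ends at the first vertex of `S`. Every edge of `Q` is at most
the last edge of `W`, which is the first edge of `P`; `S` cannot use that edge because both its
ends lie in `A`, so all edges of `S` are larger, and `Q` followed by `S` is an increasing path.
-/

theorem List.Pairwise.eq_or_rel_of_getLast? {α : Type*} {R : α → α → Prop} {l : List α}
    {a x : α} (hl : l.Pairwise R) (ha : l.getLast? = some a) (hx : x ∈ l) : x = a ∨ R x a := by
  rw [← List.dropLast_append_getLast? a ha] at hl hx
  rcases List.mem_append.1 hx with hx | hx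
  · exact .inr ((List.pairwise_append.1 hl).2.2 x hx a (List.mem_singleton_self a))
  · exact .inl (List.mem_singleton.1 hx)

theorem List.countP_le_length_of_nodup {α : Type*} {l l' : List α} {p : α → Bool}
    (hl : l.Nodup) (h : ∀ x ∈ l, p x → x ∈ l') : l.countP p ≤ l'.length := by
  rw [List.countP_eq_length_filter]
  refine ((hl.filter p).subperm fun x hx => ?_).length_le
  exact h x (List.mem_of_mem_filter hx) (List.mem_filter.1 hx).2

theorem div_add_one_sub_one_le {ℓ k m : ℕ} (h : ℓ + 1 ≤ (k + 1) * (m + 1)) :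
    (ℓ : ℝ) / (k + 1) - 1 ≤ m := by
  rw [div_sub_one (by positivity), div_le_iff₀ (by positivity)]
  have : (ℓ : ℝ) + 1 ≤ (k + 1) * (m + 1) := by exact_mod_cast h
  nlinarith

namespace EO

variable {V : Type*} {w : Sym2 V → ℕ} {l l₁ l₂ : List (Sym2 V)}

theorem increasing_iff_pairwise : Increasing w l ↔ l.Pairwise fun a b => w a < w b :=
  List.isChain_iff_pairwise

theorem Increasing.sublist (h : Increasing w l₂) (hl : l₁.Sublist l₂) : Increasing w l₁ :=
  increasing_iff_pairwise.2 ((increasing_iff_pairwise.1 h).sublist hl)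

theorem Increasing.append (h₁ : Increasing w l₁) (h₂ : Increasing w l₂)
    (h : ∀ x ∈ l₁, ∀ y ∈ l₂, w x < w y) : Increasing w (l₁ ++ l₂) :=
  increasing_iff_pairwise.2 <| List.pairwise_append.2
    ⟨increasing_iff_pairwise.1 h₁, increasing_iff_pairwise.1 h₂, h⟩

theorem Increasing.lt_of_getLast?_eq_head? {e x y : Sym2 V} (h₁ : Increasing w l₁)
    (h₂ : Increasing w l₂) (hl₁ : l₁.getLast? = some e) (hl₂ : l₂.head? = some e)
    (hx : x ∈ l₁) (hy : y ∈ l₂) (hye : y ≠ e) : w x < w y := by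
  obtain ⟨t, rfl⟩ := List.head?_eq_some_iff.1 hl₂
  have hey : w e < w y := (List.pairwise_cons.1 (increasing_iff_pairwise.1 h₂)).1 y
    ((List.mem_cons.1 hy).resolve_left hye)
  rcases (increasing_iff_pairwise.1 h₁).eq_or_rel_of_getLast? hl₁ hx with rfl | hxe
  · exact hey
  · exact hxe.trans hey

end EO

namespace SimpleGraph.Walk

variable {V : Type*} {G : SimpleGraph V} {u v w c d : V}

theorem IsSubwalk.edges_sublist {u' v' : V} {p : G.Walk u v} {q : G.Walk u' v'}
    (h : p.IsSubwalk q) : p.edges.Sublist q.edges := by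
  obtain ⟨r₁, r₂, rfl⟩ := h
  simp only [edges_append]
  exact (List.sublist_append_right _ _).trans (List.sublist_append_left _ _)

theorem exists_mem_support_tail_of_mem_edges {p : G.Walk u v} {e : Sym2 V} (he : e ∈ p.edges) :
    ∃ y ∈ e, y ∈ p.support.tail := by
  obtain ⟨d, hd, rfl⟩ := List.mem_map.1 he
  exact ⟨d.snd, Sym2.mem_mk_right _ _, map_snd_darts p ▸ List.mem_map_of_mem hd⟩

theorem start_mem_of_edges_head?_eq_some {p : G.Walk u v} {e : Sym2 V}
    (h : p.edges.head? = some e) : u ∈ e := by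
  cases p with
  | nil => simp at h
  | cons hadj p =>
    rw [edges_cons, List.head?_cons, Option.some_inj] at h
    exact h ▸ Sym2.mem_mk_left _ _

theorem support_subset_of_edges_subset {u' v' : V} {p : G.Walk u v} {q : G.Walk u' v'}
    (h : p.edges ⊆ q.edges) (hv : v ∈ q.support) : p.support ⊆ q.support := fun _ hy =>
  (mem_support_iff_exists_mem_edges.1 hy).elim (· ▸ hv) fun ⟨_, he, hye⟩ =>
    q.mem_support_of_mem_edges (h he) hye

theorem IsPath.append_of_support_tail {p : G.Walk u v} {q : G.Walk v w} (hp : p.IsPath)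
    (hq : q.IsPath) (h : ∀ y ∈ q.support.tail, y ∉ p.support) : (p.append q).IsPath := by
  rw [isPath_def, support_append]
  exact hp.support_nodup.append (hq.support_nodup.sublist (List.tail_sublist _))
    fun y hp hq => h y hq hp

section Segments

variable (A : Set V)

def IsSegment {e f : V} (S : G.Walk e f) (R : G.Walk c d) : Prop :=
  e ∈ A ∧ S.IsSubwalk R ∧ ∀ y ∈ S.support.tail, y ∉ A

variable {A}

theorem IsSegment.cons {e f : V} {S : G.Walk e f} {R : G.Walk w d} (hS : IsSegment A S R)
    (h : G.Adj c w) : IsSegment A S (cons h R) :=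
  ⟨hS.1, hS.2.1.cons h, hS.2.2⟩

variable (A) [DecidablePred (· ∈ A)]

theorem exists_isSegment_of_prefix {f : V} {R : G.Walk c d} {S₁ : G.Walk c f}
    (hS₁ : IsSegment A S₁ R)
    (hR : R.length ≤ S₁.length ∨ ∃ (e f' : V) (S : G.Walk e f'), IsSegment A S R ∧
      R.length + 1 ≤ S₁.length + 1 + R.support.tail.countP (· ∈ A) * (S.length + 1)) :
    ∃ (e f' : V) (S : G.Walk e f'), IsSegment A S R ∧
      R.length + 1 ≤ R.support.countP (· ∈ A) * (S.length + 1) := by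
  have hcount : R.support.countP (· ∈ A) = R.support.tail.countP (· ∈ A) + 1 := by
    rw [← cons_tail_support, List.countP_cons_of_pos (by simpa using hS₁.1), cons_tail_support]
  rw [hcount]
  rcases hR with hR | ⟨e, f', S, hS, hR⟩
  · exact ⟨c, f, S₁, hS₁, by nlinarith⟩
  · rcases le_total S₁.length S.length with hle | hle
    · exact ⟨e, f', S, hS, by nlinarith⟩
    · exact ⟨c, f, S₁, hS₁, by nlinarith⟩

-- `S₁` is the piece of `R` before its first return to `A`; the pieces after it are accounted
-- for by a longest one, `S`.
theorem exists_append_prefix_avoiding (R : G.Walk c d) :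
    ∃ (f : V) (S₁ : G.Walk c f) (T : G.Walk f d), R = S₁.append T ∧
      (∀ y ∈ S₁.support.tail, y ∉ A) ∧
      (R.length ≤ S₁.length ∨ ∃ (e f' : V) (S : G.Walk e f'), IsSegment A S R ∧
        R.length + 1 ≤ S₁.length + 1 + R.support.tail.countP (· ∈ A) * (S.length + 1)) := by
  induction R with
  | nil => exact ⟨_, nil, nil, rfl, by simp, .inl le_rfl⟩
  | @cons c w d h R ih =>
    obtain ⟨f, S₁, T, rfl, hS₁, hR⟩ := ih
    have htail : (cons h (S₁.append T)).support.tail = w :: (S₁.append T).support.tail := by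
      rw [support_cons, List.tail_cons, cons_tail_support]
    by_cases hw : w ∈ A
    · obtain ⟨e, f', S, hS, hlen⟩ :=
        exists_isSegment_of_prefix A ⟨hw, isSubwalk_of_append_left rfl, hS₁⟩ hR
      refine ⟨c, nil, cons h (S₁.append T), rfl, by simp, .inr ⟨e, f', S, hS.cons h, ?_⟩⟩
      rw [support_cons, List.tail_cons, length_cons]
      simp only [length_nil]
      omega
    · refine ⟨f, cons h S₁, T, rfl, ?_, ?_⟩
      · intro y hy
        rw [support_cons, List.tail_cons, ← cons_tail_support] at hy
        rcases List.mem_cons.1 hy with rfl | hy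
        exacts [hw, hS₁ y hy]
      · rw [htail, List.countP_cons_of_neg (by simpa using hw), length_cons, length_cons]
        rcases hR with hR | ⟨e, f', S, hS, hR⟩
        · exact .inl (by omega)
        · exact .inr ⟨e, f', S, hS.cons h, by omega⟩

theorem exists_isSegment_length_le_mul (R : G.Walk c d) (hc : c ∈ A) :
    ∃ (e f : V) (S : G.Walk e f), IsSegment A S R ∧
      R.length + 1 ≤ R.support.countP (· ∈ A) * (S.length + 1) := by
  obtain ⟨f, S₁, T, hR, hS₁, hlen⟩ := exists_append_prefix_avoiding A R
  exact exists_isSegment_of_prefix A ⟨hc, isSubwalk_of_append_left hR, hS₁⟩ hlen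

end Segments

section Bypass

variable [DecidableEq V]

theorem exists_isPath_edges_sublist_cons (h : G.Adj u w) (p : G.Walk w v) :
    ∃ (x : V) (q : G.Walk x v),
      q.IsPath ∧ q.edges.Sublist (cons h p).edges ∧ q.edges.head? = some s(u, w) := by
  by_cases hu : u ∈ p.bypass.support
  · -- the bypass of `p` passes through `u`: cross the first edge backwards and join it there
    set D := p.bypass.dropUntil u hu
    have hwD : w ∉ D.support := by
      have hnd := p.bypass_isPath.support_nodup
      have hsuf := p.bypass.support_dropUntil_suffix_support hu
      rw [← cons_tail_support p.bypass] at hnd hsuf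
      rcases List.suffix_cons_iff.1 hsuf with heq | hsuf
      · rw [← cons_tail_support D, List.cons.injEq] at heq
        exact fun _ => h.ne heq.1
      · exact fun hw => (List.nodup_cons.1 hnd).1 (hsuf.subset hw)
    refine ⟨w, cons h.symm D, (cons_isPath_iff _ _).2 ⟨p.bypass_isPath.dropUntil hu, hwD⟩,
      ?_, by simp [Sym2.eq_swap]⟩
    rw [edges_cons, edges_cons, Sym2.eq_swap]
    exact ((p.bypass.edges_dropUntil_suffix_edges hu).sublist.trans
      p.edges_bypass_sublist_edges).cons_cons _
  · exact ⟨u, cons h p.bypass, (cons_isPath_iff _ _).2 ⟨p.bypass_isPath, hu⟩,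
      p.edges_bypass_sublist_edges.cons_cons _, rfl⟩

theorem exists_isPath_edges_sublist_of_mem_support {W : G.Walk u v} (hW : W.length ≠ 0)
    {y : V} (hy : y ∈ W.support) : ∃ (x : V) (q : G.Walk x y),
      q.IsPath ∧ q.edges.Sublist W.edges ∧ q.edges.head? = W.edges.head? := by
  cases W with
  | nil => simp at hW
  | cons h p =>
    by_cases hyu : y = u
    · subst hyu
      exact ⟨_, cons h.symm nil, by simp [h.ne'], by simp [Sym2.eq_swap],
        by simp [Sym2.eq_swap]⟩
    · have hy' : y ∈ p.support := (List.mem_cons.1 (support_cons h p ▸ hy)).resolve_left hyu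
      obtain ⟨x, q, hq, hsub, hhead⟩ := exists_isPath_edges_sublist_cons h (p.takeUntil y hy')
      exact ⟨x, q, hq,
        hsub.trans ((p.edges_takeUntil_prefix_edges hy').sublist.cons_cons _), hhead⟩

end Bypass

end SimpleGraph.Walk

open SimpleGraph Walk in
theorem stmt11_general {V : Type} (G : SimpleGraph V) (wt : Sym2 V → ℕ) {u v a b : V}
    (W : G.Walk u v) (P : G.Walk a b)
    (hWinc : EO.Increasing wt W.edges)
    (hPp : P.IsPath) (hPinc : EO.Increasing wt P.edges)
    (hW0 : W.length ≠ 0)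
    (hlink : W.edges.getLast? = P.edges.head?) :
    ∃ (c d : V) (Q : G.Walk c d), Q.IsPath ∧ EO.Increasing wt Q.edges ∧
      (∀ e ∈ Q.edges, e ∈ W.edges ∨ e ∈ P.edges) ∧
      Q.edges.head? = W.edges.head? ∧
      (P.length : ℝ) / ((W.length : ℝ) + 1) - 1 ≤ (Q.length : ℝ) := by
  have hWne : W.edges ≠ [] := by simpa [← length_edges] using hW0
  obtain ⟨e₀, hlast⟩ := Option.ne_none_iff_exists'.1 (List.getLast?_eq_none_iff.not.2 hWne)
  have hhead : P.edges.head? = some e₀ := hlink ▸ hlast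
  have he₀W : e₀ ∈ W.edges := List.mem_of_getLast? hlast
  obtain ⟨c, d, S, ⟨hcW, hSP, hSW⟩, hS⟩ :=
    P.exists_isSegment_length_le_mul {y | y ∈ W.support}
      (W.mem_support_of_mem_edges he₀W (start_mem_of_edges_head?_eq_some hhead))
  have hcount : P.support.countP (· ∈ {y | y ∈ W.support}) ≤ W.length + 1 :=
    W.length_support ▸ List.countP_le_length_of_nodup hPp.support_nodup
      fun _ _ hy => by simpa using hy
  obtain ⟨x, Q, hQ, hQW, hQhead⟩ := exists_isPath_edges_sublist_of_mem_support hW0 hcW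
  have he₀S : e₀ ∉ S.edges := fun he₀ =>
    let ⟨y, hy, hyS⟩ := exists_mem_support_tail_of_mem_edges he₀
    hSW y hyS (W.mem_support_of_mem_edges he₀W hy)
  have hQS : (Q.append S).IsPath := hQ.append_of_support_tail (isPath_of_isSubwalk hSP hPp)
    fun y hyS hyQ => hSW y hyS (support_subset_of_edges_subset hQW.subset hcW hyQ)
  refine ⟨x, d, Q.append S, hQS, ?_, ?_, ?_, ?_⟩
  · rw [edges_append]
    exact (hWinc.sublist hQW).append (hPinc.sublist hSP.edges_sublist) fun x hx y hy =>
      hWinc.lt_of_getLast?_eq_head? hPinc hlast hhead (hQW.subset hx)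
        (hSP.edges_sublist.subset hy) (ne_of_mem_of_not_mem hy he₀S)
  · simpa only [edges_append, List.mem_append] using fun e he =>
      he.imp (hQW.subset ·) (hSP.edges_sublist.subset ·)
  · rw [edges_append, List.head?_append, hQhead, Option.or_of_isSome (List.isSome_head?.2 hWne)]
  · rw [length_append, Nat.cast_add]
    have := div_add_one_sub_one_le (hS.trans (Nat.mul_le_mul_right _ hcount))
    linarith [(Nat.cast_nonneg Q.length : (0 : ℝ) ≤ _)]

/-- Lemma 4.3.  Given an increasing trail `W = w₀w₁…w_k` and an
increasing path `P = p₀p₁…p_ℓ` in an edge-ordered graph whose last edge `w_{k−1}w_k`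
equals (as an unordered pair) the first edge `p₀p₁` of `P`, there is an increasing path
using only edges of `E(W) ∪ E(P)`, starting with the edge `w₀w₁`, of length at least
`ℓ/(k + 1) − 1`. -/
theorem stmt11 {V : Type} (G : SimpleGraph V) (wt : Sym2 V → ℕ)
    (hw : Function.Injective wt) {u v a b : V}
    (W : G.Walk u v) (P : G.Walk a b)
    (hWt : W.IsTrail) (hWinc : EO.Increasing wt W.edges)
    (hPp : P.IsPath) (hPinc : EO.Increasing wt P.edges)
    (hW0 : W.length ≠ 0) (hP0 : P.length ≠ 0)
    (hlink : W.edges.getLast? = P.edges.head?) :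
    ∃ (c d : V) (Q : G.Walk c d), Q.IsPath ∧ EO.Increasing wt Q.edges ∧
      (∀ e ∈ Q.edges, e ∈ W.edges ∨ e ∈ P.edges) ∧
      Q.edges.head? = W.edges.head? ∧
      (P.length : ℝ) / ((W.length : ℝ) + 1) - 1 ≤ (Q.length : ℝ) :=
  stmt11_general G wt W P hWinc hPp hPinc hW0 hlink
end

section
/- Let G be an edge-ordered graph with average degree d, and suppose there exists 0 < ε < 1 such that every set of at most εd vertices induces at most (1/2 − ε)d edges. Then G contains a monotone path of length at least εd. -/
open scoped Classical

/-! Place a walker on every vertex and reveal the edges in increasing order; when the edge `xy`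
appears, the walkers at `x` and `y` swap places along it, so every walker traces a monotone path.
If the swap would make a walker revisit a vertex, the edge is instead charged to that walker; its
charged edges then lie inside the vertex set of its path. Every edge raises the total potential
`∑ (length + 2 · #charged)` by `2`, so this total is `2|E| = n d`. A walker whose path has
`ℓ < εd` edges has potential at most twice the number of edges induced by its `ℓ + 1` vertices,
minus `ℓ`; the sparsity hypothesis, applied to these vertices or to all but one of them, bounds
this by `(1 - ε) d`. Hence `n d ≤ (1 - ε) n d`, which is absurd. -/

open Finset

namespace Finset

theorem sum_add_eq_of_eq_off_pair {ι M : Type*} [Fintype ι] [DecidableEq ι] [AddCommMonoid M]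
    {f g : ι → M} {x y : ι} (hxy : x ≠ y) (h : ∀ c, c ≠ x → c ≠ y → f c = g c) :
    ∑ c, f c + (g x + g y) = ∑ c, g c + (f x + f y) := by
  have hy : y ∈ univ.erase x := mem_erase.2 ⟨hxy.symm, mem_univ y⟩
  have hrest : ∑ c ∈ (univ.erase x).erase y, f c = ∑ c ∈ (univ.erase x).erase y, g c :=
    sum_congr rfl fun c hc => h c (ne_of_mem_erase (mem_of_mem_erase hc)) (ne_of_mem_erase hc)
  rw [← add_sum_erase _ f (mem_univ x), ← add_sum_erase _ g (mem_univ x),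
    ← add_sum_erase _ f hy, ← add_sum_erase _ g hy, hrest]
  abel

end Finset

namespace SimpleGraph

variable {V : Type} [Fintype V] [DecidableEq V] (G : SimpleGraph V) [DecidableRel G.Adj]

def inducedEdgeFinset (s : Finset V) : Finset (Sym2 V) :=
  G.edgeFinset.filter fun e => ∀ v ∈ e, v ∈ s

variable {G}

theorem card_inducedEdgeFinset_le_erase (s : Finset V) (v : V) :
    #(G.inducedEdgeFinset s) ≤ #(G.inducedEdgeFinset (s.erase v)) + #(s.erase v) := by
  have hthrough : (G.inducedEdgeFinset s).filter (v ∈ ·) ⊆ (s.erase v).image (s(v, ·)) := by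
    intro e he
    simp only [inducedEdgeFinset, mem_filter, mem_edgeFinset] at he
    obtain ⟨⟨hG, hs⟩, hv⟩ := he
    obtain ⟨u, rfl⟩ := Sym2.mem_iff_exists.1 hv
    exact mem_image.2
      ⟨u, mem_erase.2 ⟨(G.ne_of_adj hG).symm, hs u (Sym2.mem_mk_right v u)⟩, rfl⟩
  have hoff : (G.inducedEdgeFinset s).filter (v ∉ ·) ⊆ G.inducedEdgeFinset (s.erase v) := by
    intro e he
    simp only [inducedEdgeFinset, mem_filter] at he ⊢
    exact ⟨he.1.1, fun u hu => mem_erase.2 ⟨fun h => he.2 (h ▸ hu), he.1.2 u hu⟩⟩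
  rw [← card_filter_add_card_filter_not (s := G.inducedEdgeFinset s) (v ∈ ·), add_comm]
  exact add_le_add (card_le_card hoff) ((card_le_card hthrough).trans card_image_le)

end SimpleGraph

namespace EO

open SimpleGraph

variable {V : Type} {G : SimpleGraph V}

/-- A walker standing at `z` that set out from `start`; its path is stored backwards, newest
edge first. -/
structure Walker (G : SimpleGraph V) (z : V) where
  start : V
  walk : G.Walk z start
  charged : Finset (Sym2 V)

namespace Walker

variable {z : V}

def potential (T : Walker G z) : ℕ := T.walk.length + 2 * #T.charged

def charge [DecidableEq V] (T : Walker G z) (e : Sym2 V) : Walker G z :=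
  { T with charged := insert e T.charged }

def extend {x y : V} (T : Walker G y) (h : G.Adj x y) : Walker G x :=
  ⟨T.start, .cons h T.walk, T.charged⟩

theorem potential_charge [DecidableEq V] (T : Walker G z) {e : Sym2 V} (he : e ∉ T.charged) :
    (T.charge e).potential = T.potential + 2 := by
  simp only [potential, charge, card_insert_of_notMem he]
  ring

theorem potential_extend {x y : V} (T : Walker G y) (h : G.Adj x y) :
    (T.extend h).potential = T.potential + 1 := by
  simp only [potential, extend, Walk.length_cons]
  ring

variable (wt : Sym2 V → ℕ) (s : Finset (Sym2 V))

structure Valid (T : Walker G z) : Prop where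
  isPath : T.walk.IsPath
  decreasing : T.walk.edges.IsChain fun e f => wt f < wt e
  edges_subset : ∀ e ∈ T.walk.edges, e ∈ s
  charged_subset : T.charged ⊆ s
  charged_induced : ∀ e ∈ T.charged, ∀ v ∈ e, v ∈ T.walk.support
  charged_notMem_edges : ∀ e ∈ T.charged, e ∉ T.walk.edges

variable {wt s}

theorem Valid.mono {T : Walker G z} (hT : T.Valid wt s) {s' : Finset (Sym2 V)} (hss' : s ⊆ s') :
    T.Valid wt s' where
  __ := hT
  edges_subset e he := hss' (hT.edges_subset e he)
  charged_subset := hT.charged_subset.trans hss'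

theorem Valid.charge [DecidableEq V] {T : Walker G z} (hT : T.Valid wt s) {e : Sym2 V}
    (he : e ∉ s) (hsupp : ∀ v ∈ e, v ∈ T.walk.support) :
    (T.charge e).Valid wt (insert e s) where
  __ := hT.mono (subset_insert e s)
  charged_subset := insert_subset_insert e hT.charged_subset
  charged_induced f hf := by
    rcases mem_insert.1 hf with rfl | hf
    exacts [hsupp, hT.charged_induced f hf]
  charged_notMem_edges f hf hfw := by
    rcases mem_insert.1 hf with rfl | hf
    exacts [he (hT.edges_subset f hfw), hT.charged_notMem_edges f hf hfw]

theorem Valid.extend [DecidableEq V] {x y : V} {T : Walker G y} (hT : T.Valid wt s)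
    (h : G.Adj x y) (hx : x ∉ T.walk.support) (hlt : ∀ f ∈ s, wt f < wt s(x, y)) :
    (T.extend h).Valid wt (insert s(x, y) s) where
  isPath := (Walk.cons_isPath_iff h T.walk).2 ⟨hT.isPath, hx⟩
  decreasing := by
    refine List.isChain_cons.2 ⟨fun f hf => hlt f ?_, hT.decreasing⟩
    exact hT.edges_subset f (List.mem_of_mem_head? hf)
  edges_subset f hf := by
    rcases List.mem_cons.1 hf with rfl | hf
    exacts [mem_insert_self _ s, mem_insert_of_mem (hT.edges_subset f hf)]
  charged_subset := hT.charged_subset.trans (subset_insert _ s)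
  charged_induced f hf v hv := List.mem_cons_of_mem x (hT.charged_induced f hf v hv)
  charged_notMem_edges f hf hfw := by
    rcases List.mem_cons.1 hfw with rfl | hfw
    exacts [(hlt _ (hT.charged_subset hf)).false, hT.charged_notMem_edges f hf hfw]

theorem Valid.increasing {T : Walker G z} (hT : T.Valid wt s) :
    Increasing wt T.walk.reverse.edges := by
  rw [Increasing, Walk.edges_reverse]
  exact List.isChain_reverse.2 hT.decreasing

theorem Valid.length_add_card_charged_le [Fintype V] [DecidableEq V] [DecidableRel G.Adj]
    {T : Walker G z} (hT : T.Valid wt s) (hs : s ⊆ G.edgeFinset) :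
    T.walk.length + #T.charged ≤ #(G.inducedEdgeFinset T.walk.support.toFinset) := by
  have hdisj : Disjoint T.walk.edges.toFinset T.charged :=
    disjoint_left.2 fun e he hc => hT.charged_notMem_edges e hc (List.mem_toFinset.1 he)
  have hsub :
      T.walk.edges.toFinset ∪ T.charged ⊆ G.inducedEdgeFinset T.walk.support.toFinset := by
    intro e he
    refine mem_filter.2 ⟨?_, fun v hv => List.mem_toFinset.2 ?_⟩
    · rcases mem_union.1 he with he | he
      exacts [mem_edgeFinset.2 (T.walk.edges_subset_edgeSet (List.mem_toFinset.1 he)),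
        hs (hT.charged_subset he)]
    · rcases mem_union.1 he with he | he
      exacts [Walk.mem_support_of_mem_edges (List.mem_toFinset.1 he) hv,
        hT.charged_induced e he v hv]
  calc T.walk.length + #T.charged = #(T.walk.edges.toFinset ∪ T.charged) := by
        rw [card_union_of_disjoint hdisj, List.toFinset_card_of_nodup hT.isPath.edges_nodup,
          Walk.length_edges]
    _ ≤ _ := card_le_card hsub

end Walker

variable [Fintype V] [DecidableEq V] {wt : Sym2 V → ℕ} {s : Finset (Sym2 V)}
  {R : ∀ z, Walker G z}

theorem exists_walkers_of_pair (hR : ∀ z, (R z).Valid wt s) {s' : Finset (Sym2 V)}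
    (hss' : s ⊆ s') {x y : V} (hxy : x ≠ y) {Tx : Walker G x} {Ty : Walker G y}
    (hTx : Tx.Valid wt s') (hTy : Ty.Valid wt s')
    (hpot : Tx.potential + Ty.potential = (R x).potential + (R y).potential + 2) :
    ∃ R' : ∀ z, Walker G z, (∀ z, (R' z).Valid wt s') ∧
      ∑ z, (R' z).potential = ∑ z, (R z).potential + 2 := by
  set R' := Function.update (Function.update R x Tx) y Ty
  have hx : R' x = Tx := by simp [R', Function.update_of_ne hxy]
  have hy : R' y = Ty := by simp [R']
  have hrest : ∀ c, c ≠ x → c ≠ y → R' c = R c := fun c hcx hcy => by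
    simp [R', Function.update_of_ne hcx, Function.update_of_ne hcy]
  refine ⟨R', fun c => ?_, ?_⟩
  · by_cases hcx : c = x
    · subst hcx; rw [hx]; exact hTx
    by_cases hcy : c = y
    · subst hcy; rw [hy]; exact hTy
    rw [hrest c hcx hcy]; exact (hR c).mono hss'
  · have := sum_add_eq_of_eq_off_pair (f := fun c => (R' c).potential)
      (g := fun c => (R c).potential) hxy fun c hcx hcy => by rw [hrest c hcx hcy]
    simp only [hx, hy, hpot] at this
    omega

theorem exists_walkers_charge (hR : ∀ z, (R z).Valid wt s) {x y : V} (hxy : x ≠ y)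
    (hy : y ∈ (R x).walk.support) (hlt : ∀ f ∈ s, wt f < wt s(x, y)) :
    ∃ R' : ∀ z, Walker G z, (∀ z, (R' z).Valid wt (insert s(x, y) s)) ∧
      ∑ z, (R' z).potential = ∑ z, (R z).potential + 2 := by
  have he : s(x, y) ∉ s := fun he => (hlt _ he).false
  have hcharged : s(x, y) ∉ (R x).charged := fun h => he ((hR x).charged_subset h)
  refine exists_walkers_of_pair hR (subset_insert _ s) hxy ((hR x).charge he ?_)
    ((hR y).mono (subset_insert _ s)) ?_
  · intro v hv
    rcases Sym2.mem_iff.1 hv with rfl | rfl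
    exacts [(R v).walk.start_mem_support, hy]
  · rw [Walker.potential_charge _ hcharged]
    ring

theorem exists_walkers_extend (hR : ∀ z, (R z).Valid wt s) {x y : V} (h : G.Adj x y)
    (hy : y ∉ (R x).walk.support) (hx : x ∉ (R y).walk.support)
    (hlt : ∀ f ∈ s, wt f < wt s(x, y)) :
    ∃ R' : ∀ z, Walker G z, (∀ z, (R' z).Valid wt (insert s(x, y) s)) ∧
      ∑ z, (R' z).potential = ∑ z, (R z).potential + 2 := by
  have hTy := (hR x).extend h.symm hy (Sym2.eq_swap ▸ hlt)
  rw [Sym2.eq_swap] at hTy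
  refine exists_walkers_of_pair hR (subset_insert _ s) h.ne ((hR y).extend h hx hlt) hTy ?_
  rw [Walker.potential_extend, Walker.potential_extend]
  ring

theorem exists_walkers_insert (hR : ∀ z, (R z).Valid wt s) {e : Sym2 V} (he : e ∈ G.edgeSet)
    (hlt : ∀ f ∈ s, wt f < wt e) :
    ∃ R' : ∀ z, Walker G z, (∀ z, (R' z).Valid wt (insert e s)) ∧
      ∑ z, (R' z).potential = ∑ z, (R z).potential + 2 := by
  induction e using Sym2.ind with | _ x y
  have h : G.Adj x y := he
  clear he
  by_cases hy : y ∈ (R x).walk.support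
  · exact exists_walkers_charge hR h.ne hy hlt
  by_cases hx : x ∈ (R y).walk.support
  · rw [Sym2.eq_swap] at hlt ⊢
    exact exists_walkers_charge hR h.ne.symm hx hlt
  exact exists_walkers_extend hR h hy hx hlt

theorem exists_valid_walkers [DecidableRel G.Adj] (hw : Function.Injective wt)
    (s : Finset (Sym2 V)) (hs : s ⊆ G.edgeFinset) :
    ∃ R : ∀ z, Walker G z, (∀ z, (R z).Valid wt s) ∧ ∑ z, (R z).potential = 2 * #s := by
  induction s using Finset.induction_on_max_value wt with
  | empty =>
    refine ⟨fun z => ⟨z, .nil, ∅⟩,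
      fun z => ⟨.nil, List.isChain_nil, ?_, ?_, ?_, ?_⟩, ?_⟩ <;> simp [Walker.potential]
  | insert e s he hmax ih =>
    obtain ⟨R, hR, hpot⟩ := ih ((subset_insert e s).trans hs)
    have hlt : ∀ f ∈ s, wt f < wt e := fun f hf =>
      (hmax f hf).lt_of_ne (hw.ne (ne_of_mem_of_not_mem hf he))
    obtain ⟨R', hR', hpot'⟩ :=
      exists_walkers_insert hR (mem_edgeFinset.1 (hs (mem_insert_self e s))) hlt
    exact ⟨R', hR', by rw [hpot', hpot, card_insert_of_notMem he]; ring⟩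

variable {d ε : ℝ}

theorem two_mul_card_inducedEdgeFinset_le [DecidableRel G.Adj]
    (hsparse : ∀ S : Finset V, (#S : ℝ) ≤ ε * d →
      (#(G.inducedEdgeFinset S) : ℝ) ≤ (1 / 2 - ε) * d)
    {S : Finset V} {v : V} (hv : v ∈ S) (hS : (#S : ℝ) ≤ ε * d + 1) :
    2 * (#(G.inducedEdgeFinset S) : ℝ) ≤ (#S - 1) + (1 - ε) * d := by
  have hS1 : (1 : ℝ) ≤ #S := by exact_mod_cast card_pos.2 ⟨v, hv⟩
  by_cases hsmall : (#S : ℝ) ≤ ε * d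
  · linarith [hsparse S hsmall]
  have herase : (#(S.erase v) : ℝ) = #S - 1 := by
    rw [card_erase_of_mem hv, Nat.cast_pred (card_pos.2 ⟨v, hv⟩)]
  have hsplit : (#(G.inducedEdgeFinset S) : ℝ) ≤
      #(G.inducedEdgeFinset (S.erase v)) + #(S.erase v) := by
    exact_mod_cast card_inducedEdgeFinset_le_erase S v
  linarith [hsparse (S.erase v) (by linarith)]

theorem Walker.Valid.potential_le [DecidableRel G.Adj] {z : V} {T : Walker G z}
    (hT : T.Valid wt s) (hs : s ⊆ G.edgeFinset)
    (hsparse : ∀ S : Finset V, (#S : ℝ) ≤ ε * d →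
      (#(G.inducedEdgeFinset S) : ℝ) ≤ (1 / 2 - ε) * d)
    (hlen : (T.walk.length : ℝ) ≤ ε * d) :
    (T.potential : ℝ) ≤ (1 - ε) * d := by
  have hcard : #T.walk.support.toFinset = T.walk.length + 1 := by
    rw [List.toFinset_card_of_nodup hT.isPath.support_nodup, Walk.length_support]
  have hinduced :
      (T.walk.length : ℝ) + #T.charged ≤ #(G.inducedEdgeFinset T.walk.support.toFinset) := by
    exact_mod_cast hT.length_add_card_charged_le hs
  have h2 := two_mul_card_inducedEdgeFinset_le hsparse
    (List.mem_toFinset.2 T.walk.start_mem_support) (by rw [hcard]; push_cast; linarith)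
  rw [hcard] at h2
  push_cast [potential] at h2 ⊢
  linarith

end EO

theorem stmt13_general {V : Type} [Fintype V] [DecidableEq V] [Nonempty V] (G : SimpleGraph V)
    [DecidableRel G.Adj] (wt : Sym2 V → ℕ) (hw : Function.Injective wt) (d ε : ℝ)
    (hd : d = 2 * (G.edgeSet.ncard : ℝ) / (Fintype.card V : ℝ))
    (hsparse : ∀ s : Finset V, (s.card : ℝ) ≤ ε * d →
      ((G.edgeFinset.filter fun e => ∀ v ∈ e, v ∈ s).card : ℝ) ≤ (1 / 2 - ε) * d) :
    ∃ (u v : V) (p : G.Walk u v), p.IsPath ∧ EO.Increasing wt p.edges ∧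
      ε * d ≤ (p.length : ℝ) := by
  by_contra! hshort
  have hεd : 0 < ε * d := by
    obtain ⟨v⟩ := ‹Nonempty V›
    simpa using hshort v v .nil .nil List.isChain_nil
  obtain ⟨R, hR, hpot⟩ := EO.exists_valid_walkers hw G.edgeFinset subset_rfl
  have hbound (z : V) : ((R z).potential : ℝ) ≤ (1 - ε) * d :=
    (hR z).potential_le subset_rfl hsparse <| by
      simpa using (hshort _ _ _ (hR z).isPath.reverse (hR z).increasing).le
  have hn : (0 : ℝ) < Fintype.card V := by exact_mod_cast Fintype.card_pos
  have hE : (Fintype.card V : ℝ) * d = 2 * #G.edgeFinset := by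
    rw [hd, ← G.coe_edgeFinset, Set.ncard_coe_finset]
    field_simp
  have hsum : (2 * #G.edgeFinset : ℝ) ≤ Fintype.card V * ((1 - ε) * d) :=
    calc (2 * #G.edgeFinset : ℝ) = ∑ z, ((R z).potential : ℝ) := by exact_mod_cast hpot.symm
      _ ≤ ∑ _z : V, (1 - ε) * d := sum_le_sum fun z _ => hbound z
      _ = Fintype.card V * ((1 - ε) * d) := by simp
  nlinarith [mul_pos hn hεd]

/-- Proposition 5.1.  Let `G` be an edge-ordered graph with average
degree `d`, and suppose there is `0 < ε < 1` such that every set of at most `εd` vertices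
induces at most `(1/2 − ε)d` edges.  Then `G` has a monotone (increasing) path of length
at least `εd`. -/
theorem stmt13 {V : Type} [Fintype V] [DecidableEq V] [Nonempty V] (G : SimpleGraph V)
    [DecidableRel G.Adj] (wt : Sym2 V → ℕ) (hw : Function.Injective wt) (d ε : ℝ)
    (hd : d = 2 * (G.edgeSet.ncard : ℝ) / (Fintype.card V : ℝ))
    (hε0 : 0 < ε) (hε1 : ε < 1)
    (hsparse : ∀ s : Finset V, (s.card : ℝ) ≤ ε * d →
      ((G.edgeFinset.filter fun e => ∀ v ∈ e, v ∈ s).card : ℝ) ≤ (1 / 2 - ε) * d) :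
    ∃ (u v : V) (p : G.Walk u v), p.IsPath ∧ EO.Increasing wt p.edges ∧
      ε * d ≤ (p.length : ℝ) :=
  stmt13_general G wt hw d ε hd hsparse
end
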